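/- Let ū be a super-solution and u̲ a sub-solution of (⋆) on (0,∞) such that: 0 ≤ ū, u̲ ≤ s_+ on (0,∞); ū(r) = ᾱ·r^{γ_+} + o(r^{γ_+}) and u̲(r) = α̲·r^{γ_+} + o(r^{γ_+}) as r → 0, with ᾱ > 0; and ū(r) = s_+ − β̄·r^{−2} + o(r^{−2}) and u̲(r) = s_+ − β̲·r^{−2} + o(r^{−2}) as r → ∞, with β̲ > 0. Then there exists θ₀ > 0 such that for every θ ∈ (0, θ₀) and every r ∈ (0,∞), one has ū(r/θ) > u̲(r). -/

import Mathlib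

open Set Filter Topology MeasureTheory
open scoped ENNReal NNReal

/-- `γ₊ = ((1-p) + √((p-1)² + 4q))/2`, the positive root of `γ² + (p-1)γ - q = 0`. -/
noncomputable def gammaPlus (p q : ℝ) : ℝ :=
  ((1 - p) + Real.sqrt ((p - 1) ^ 2 + 4 * q)) / 2

/-- Condition (condF) on the nonlinearity `F` (with `0 < sp` recorded separately). -/
def CondF (F : ℝ → ℝ) (sp : ℝ) : Prop :=
  ContDiff ℝ 1 F ∧ F 0 = 0 ∧ F sp = 0 ∧
    (∀ t ∈ Set.Ioo 0 sp, F t < 0) ∧ (∀ t, sp < t → 0 < F t) ∧ 0 < deriv F sp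

/-- The ODE (⋆) `u'' + (p/r) u' - (q/r²) u = F(u)` holds at the point `r`. -/
def ODEAt (p q : ℝ) (F : ℝ → ℝ) (u : ℝ → ℝ) (r : ℝ) : Prop :=
  deriv (deriv u) r + (p / r) * deriv u r - (q / r ^ 2) * u r = F (u r)

/-- `ψ` is locally Lipschitz on the set `I`. -/
def LocLipOn (I : Set ℝ) (ψ : ℝ → ℝ) : Prop :=
  ∀ x ∈ I, ∃ K : ℝ≥0, ∃ t ∈ nhdsWithin x I, LipschitzOnWith K ψ t

/-- `ψ` is a locally Lipschitz, piecewise `C²` super-solution of (⋆) on `I`: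
outside a locally finite set `S` of jump points it is `C²` and satisfies
`ψ'' + (p/r)ψ' - (q/r²)ψ ≤ F(ψ)`, and at each jump point the one-sided
derivatives exist with `ψ'(r₀⁻) > ψ'(r₀⁺)`. -/
def IsSuperSolutionOn (p q : ℝ) (F : ℝ → ℝ) (I : Set ℝ) (ψ : ℝ → ℝ) : Prop :=
  LocLipOn I ψ ∧
    ∃ S : Set ℝ,
      (∀ x ∈ I, ∃ ε > 0, (S ∩ Set.Ioo (x - ε) (x + ε)).Finite) ∧
      (∀ x ∈ I \ S, ContDiffAt ℝ 2 ψ x ∧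
        deriv (deriv ψ) x + (p / x) * deriv ψ x - (q / x ^ 2) * ψ x ≤ F (ψ x)) ∧
      (∀ x ∈ I ∩ S, ∃ dl dr : ℝ, HasDerivWithinAt ψ dl (Set.Iio x) x ∧
        HasDerivWithinAt ψ dr (Set.Ioi x) x ∧ dr < dl)

/-- `ψ` is a locally Lipschitz, piecewise `C²` sub-solution of (⋆) on `I`. -/
def IsSubSolutionOn (p q : ℝ) (F : ℝ → ℝ) (I : Set ℝ) (ψ : ℝ → ℝ) : Prop :=
  LocLipOn I ψ ∧
    ∃ S : Set ℝ,
      (∀ x ∈ I, ∃ ε > 0, (S ∩ Set.Ioo (x - ε) (x + ε)).Finite) ∧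
      (∀ x ∈ I \ S, ContDiffAt ℝ 2 ψ x ∧
        F (ψ x) ≤ deriv (deriv ψ) x + (p / x) * deriv ψ x - (q / x ^ 2) * ψ x) ∧
      (∀ x ∈ I ∩ S, ∃ dl dr : ℝ, HasDerivWithinAt ψ dl (Set.Iio x) x ∧
        HasDerivWithinAt ψ dr (Set.Ioi x) x ∧ dl < dr)

/-- `u(r) = α·r^γ + o(r^γ)` as `r → 0⁺`. -/
def AsympZero (u : ℝ → ℝ) (α γ : ℝ) : Prop :=
  Filter.Tendsto (fun r : ℝ => (u r - α * r ^ γ) / r ^ γ) (nhdsWithin 0 (Set.Ioi 0)) (nhds 0)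

/-- `u(r) = sp - β·r⁻² + o(r⁻²)` as `r → ∞`. -/
def AsympInfty (u : ℝ → ℝ) (sp β : ℝ) : Prop :=
  Filter.Tendsto (fun r : ℝ => (u r - (sp - β / r ^ 2)) * r ^ 2) Filter.atTop (nhds 0)

/-!
A super-solution `ū ≥ 0` that is positive near `0` is positive everywhere. At a first zero
`r₀` it has a local minimum, so the one-sided derivatives satisfy `ū'(r₀⁻) ≤ 0 ≤ ū'(r₀⁺)`,
which rules out a kink of a super-solution; hence `ū` is `C²` near `r₀`, and there
`ū'' ≤ B |ū'| + M ū` with `ū(r₀) = ū'(r₀) = 0`, because `F` is Lipschitz near `0` and `F(0) = 0`.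
A Gronwall argument for `ū² + ((ū')⁻)²` then forces `ū = 0` on an interval to the left of `r₀`.
Dually, a sub-solution `u̲ ≤ s₊` never touches `s₊`: at a touching point `u̲' = 0`, `u̲'' ≤ 0`
and `F(s₊) = 0`, so the sub-solution inequality would give `0 ≤ -q s₊ / r²`.

The inequality `ū(r/θ) > u̲(r)` is then checked in three regimes. For large `r`,
`(s₊ - ū(r/θ)) r² = O(θ²)` while `(s₊ - u̲(r)) r² ≥ β̲/2`. For bounded `r` with `r/θ` large,
`ū(r/θ)` is close to `s₊`, whereas `u̲` stays below `sup u̲ < s₊` on bounded sets since it is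
continuous, `< s₊` and tends to `0` at `0`. For `r/θ` bounded, `ū(R) ≥ c R^γ₊` and
`u̲(r) ≤ C r^γ₊`, so `ū(r/θ) ≥ c θ^(-γ₊) r^γ₊ > u̲(r)` once `C θ^γ₊ < c`.
-/

theorem LocLipOn.continuousOn {I : Set ℝ} {ψ : ℝ → ℝ} (h : LocLipOn I ψ) : ContinuousOn ψ I :=
  fun x hx =>
    let ⟨_, _, ht, hlip⟩ := h x hx
    (hlip.continuousOn x (mem_of_mem_nhdsWithin hx ht)).mono_of_mem_nhdsWithin ht

theorem IsLocalMin.le_of_hasDerivWithinAt_Iio_Ioi {f : ℝ → ℝ} {x dl dr : ℝ} (h : IsLocalMin f x)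
    (hl : HasDerivWithinAt f dl (Iio x) x) (hr : HasDerivWithinAt f dr (Ioi x) x) : dl ≤ dr := by
  have hl' := (hasDerivWithinAt_iff_tendsto_slope' (show x ∉ Iio x from lt_irrefl x)).1 hl
  have hr' := (hasDerivWithinAt_iff_tendsto_slope' (show x ∉ Ioi x from lt_irrefl x)).1 hr
  have hdl : dl ≤ 0 := le_of_tendsto hl' <| by
    filter_upwards [nhdsWithin_le_nhds h, self_mem_nhdsWithin] with y hy (hyx : y < x)
    rw [slope_def_field]
    exact div_nonpos_of_nonneg_of_nonpos (sub_nonneg.2 hy) (sub_nonpos.2 hyx.le)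
  have hdr : 0 ≤ dr := ge_of_tendsto hr' <| by
    filter_upwards [nhdsWithin_le_nhds h, self_mem_nhdsWithin] with y hy (hxy : x < y)
    rw [slope_def_field]
    exact div_nonneg (sub_nonneg.2 hy) (sub_nonneg.2 hxy.le)
  exact hdl.trans hdr

theorem IsLocalMax.deriv_deriv_nonpos {f : ℝ → ℝ} {x : ℝ} (h : IsLocalMax f x)
    (hc : ContinuousAt f x) : deriv (deriv f) x ≤ 0 := by
  by_contra! hpos
  have hmin := isLocalMin_of_deriv_deriv_pos hpos h.deriv_eq_zero hc
  have hconst : f =ᶠ[𝓝 x] fun _ => f x := (h.and hmin).mono fun y hy => le_antisymm hy.1 hy.2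
  have hderiv : deriv f =ᶠ[𝓝 x] fun _ => 0 :=
    hconst.eventuallyEq_nhds.mono fun y hy => by rw [hy.deriv_eq, deriv_const]
  rw [hderiv.deriv_eq, deriv_const] at hpos
  exact lt_irrefl 0 hpos

theorem HasDerivAt.max_zero_sq {g : ℝ → ℝ} {g' x : ℝ} (hg : HasDerivAt g g' x) :
    HasDerivAt (fun y => max (g y) 0 ^ 2) (2 * max (g x) 0 * g') x := by
  have hsq : HasDerivAt (fun y => g y ^ 2) (2 * g x * g') x := by simpa using hg.fun_pow 2
  rcases lt_trichotomy (g x) 0 with hneg | hzero | hpos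
  · have : (fun y => max (g y) 0 ^ 2) =ᶠ[𝓝 x] fun _ => 0 := by
      filter_upwards [hg.continuousAt.eventually (eventually_lt_nhds hneg)] with y hy
      simp [max_eq_right hy.le]
    simpa [max_eq_right hneg.le] using (hasDerivAt_const x (0 : ℝ)).congr_of_eventuallyEq this
  · rw [hzero, mul_zero, zero_mul] at hsq
    rw [hzero, max_self, mul_zero, zero_mul]
    rw [hasDerivAt_iff_isLittleO] at hsq ⊢
    refine Asymptotics.IsBigO.trans_isLittleO
      (Asymptotics.IsBigO.of_bound 1 (Eventually.of_forall fun y => ?_)) hsq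
    simp only [hzero, max_self, Real.norm_eq_abs, smul_zero, sub_zero, one_mul, ne_eq,
      OfNat.ofNat_ne_zero, not_false_eq_true, zero_pow, abs_pow, sq_abs]
    rcases le_total (g y) 0 with hy | hy
    · rw [max_eq_right hy, sq (0 : ℝ), mul_zero]; positivity
    · rw [max_eq_left hy]
  · have : (fun y => max (g y) 0 ^ 2) =ᶠ[𝓝 x] fun y => g y ^ 2 := by
      filter_upwards [hg.continuousAt.eventually (eventually_gt_nhds hpos)] with y hy
      rw [max_eq_left hy.le]
    rw [max_eq_left hpos.le]
    exact hsq.congr_of_eventuallyEq this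

theorem neg_mul_energy_le_deriv {v d d2 B M : ℝ} (hv : 0 ≤ v) (h : d2 ≤ B * |d| + M * v) :
    -((1 + 2 * |B| + |M|) * (v ^ 2 + max (-d) 0 ^ 2)) ≤ 2 * v * d + 2 * max (-d) 0 * -d2 := by
  set m := max (-d) 0 with hm_def
  have hm : 0 ≤ m := le_max_right _ _
  have hmd : m * |d| = m ^ 2 := by
    rcases le_total d 0 with hd | hd
    · rw [abs_of_nonpos hd, hm_def, max_eq_left (neg_nonneg.2 hd), sq]
    · rw [hm_def, max_eq_right (neg_nonpos.2 hd), zero_mul, sq, zero_mul]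
  have h1 : v * -m ≤ v * d := mul_le_mul_of_nonneg_left (neg_le.1 (le_max_left _ _)) hv
  have h2 : m * d2 ≤ B * m ^ 2 + M * (m * v) :=
    calc m * d2 ≤ m * (B * |d| + M * v) := mul_le_mul_of_nonneg_left h hm
      _ = B * (m * |d|) + M * (m * v) := by ring
      _ = B * m ^ 2 + M * (m * v) := by rw [hmd]
  have h3 : B * m ^ 2 ≤ |B| * m ^ 2 := mul_le_mul_of_nonneg_right (le_abs_self B) (sq_nonneg m)
  have h4 : 2 * (M * (m * v)) ≤ |M| * (m ^ 2 + v ^ 2) :=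
    calc 2 * (M * (m * v)) ≤ 2 * (|M| * (m * v)) := by
          have := mul_nonneg hm hv
          gcongr
          exact le_abs_self M
      _ ≤ |M| * (m ^ 2 + v ^ 2) := by nlinarith [mul_nonneg (abs_nonneg M) (sq_nonneg (m - v))]
  nlinarith [sq_nonneg (v - m), abs_nonneg B]

theorem eqOn_zero_of_deriv_deriv_le {f f' f'' : ℝ → ℝ} {a b B M : ℝ}
    (hf : ∀ x ∈ Icc a b, HasDerivAt f (f' x) x) (hf' : ∀ x ∈ Icc a b, HasDerivAt f' (f'' x) x)
    (hle : ∀ x ∈ Icc a b, f'' x ≤ B * |f' x| + M * f x)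
    (hnonneg : ∀ x ∈ Icc a b, 0 ≤ f x) (hfb : f b = 0) (hf'b : f' b = 0) :
    ∀ x ∈ Icc a b, f x = 0 := by
  -- `W' ≥ -K W` on `[a, b]`, so `exp (K x) * W x` is nondecreasing; it vanishes at `b`.
  set K := 1 + 2 * |B| + |M|
  set W : ℝ → ℝ := fun x => f x ^ 2 + max (-f' x) 0 ^ 2
  have hW : ∀ x ∈ Icc a b,
      HasDerivAt W (2 * f x * f' x + 2 * max (-f' x) 0 * -f'' x) x := fun x hx => by
    have hf2 : HasDerivAt (fun y => f y ^ 2) (2 * f x * f' x) x := by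
      simpa using (hf x hx).fun_pow 2
    exact hf2.add (hf' x hx).neg.max_zero_sq
  have hE : ∀ x ∈ Icc a b, HasDerivAt (fun y => Real.exp (K * y) * W y)
      (Real.exp (K * x) * (K * W x + (2 * f x * f' x + 2 * max (-f' x) 0 * -f'' x))) x :=
    fun x hx => (((hasDerivAt_id' x).const_mul K).exp.fun_mul (hW x hx)).congr_deriv (by ring)
  have hmono : MonotoneOn (fun y => Real.exp (K * y) * W y) (Icc a b) := by
    refine monotoneOn_of_hasDerivWithinAt_nonneg (convex_Icc a b)
      (f' := fun x => Real.exp (K * x) * (K * W x + (2 * f x * f' x + 2 * max (-f' x) 0 * -f'' x)))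
      (fun x hx => (hE x hx).continuousAt.continuousWithinAt) (fun x hx => ?_) (fun x hx => ?_)
    · rw [interior_Icc] at hx
      exact (hE x (Ioo_subset_Icc_self hx)).hasDerivWithinAt
    · rw [interior_Icc] at hx
      have hx' := Ioo_subset_Icc_self hx
      have := neg_mul_energy_le_deriv (hnonneg x hx') (hle x hx')
      exact mul_nonneg (Real.exp_pos _).le (by linarith)
  intro x hx
  have hab : b ∈ Icc a b := ⟨hx.1.trans hx.2, le_rfl⟩
  have hEx : Real.exp (K * x) * W x ≤ 0 := by
    simpa [W, hfb, hf'b] using hmono hx hab hx.2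
  have hWx : W x ≤ 0 := nonpos_of_mul_nonpos_right hEx (Real.exp_pos _)
  have : f x ^ 2 ≤ 0 := by nlinarith [sq_nonneg (max (-f' x) 0)]
  exact pow_eq_zero_iff two_ne_zero |>.1 (le_antisymm this (sq_nonneg _))

theorem eventually_notMem_of_finite_inter_Ioo {S : Set ℝ} {x : ℝ}
    (hS : ∃ ε > 0, (S ∩ Ioo (x - ε) (x + ε)).Finite) (hx : x ∉ S) : ∀ᶠ y in 𝓝 x, y ∉ S := by
  obtain ⟨ε, hε, hfin⟩ := hS
  filter_upwards [Ioo_mem_nhds (sub_lt_self x hε) (lt_add_of_pos_right x hε),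
    hfin.isClosed.isOpen_compl.mem_nhds fun h => hx h.1] with y hy hyS hS'
  exact hyS ⟨hS', hy⟩

theorem le_of_superSolution_ineq {d₂ d₁ v p q y a L Fv : ℝ} (ha : 0 < a) (hay : a ≤ y)
    (hv : 0 ≤ v) (h : d₂ + p / y * d₁ - q / y ^ 2 * v ≤ Fv) (hF : Fv ≤ L * v) :
    d₂ ≤ |p| / a * |d₁| + (L + |q| / a ^ 2) * v := by
  have hy : 0 < y := ha.trans_le hay
  have hp : -(p / y * d₁) ≤ |p| / a * |d₁| :=
    calc -(p / y * d₁) ≤ |p / y * d₁| := neg_le_abs _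
      _ = |p| / y * |d₁| := by rw [abs_mul, abs_div, abs_of_pos hy]
      _ ≤ |p| / a * |d₁| := by gcongr
  have hq : q / y ^ 2 * v ≤ |q| / a ^ 2 * v := by
    refine mul_le_mul_of_nonneg_right ?_ hv
    calc q / y ^ 2 ≤ |q| / y ^ 2 := by gcongr; exact le_abs_self q
      _ ≤ |q| / a ^ 2 := by gcongr
  linarith

theorem IsSuperSolutionOn.exists_zero_lt {p q : ℝ} {F u : ℝ → ℝ}
    (hu : IsSuperSolutionOn p q F (Ioi 0) u) (hF : ContDiffAt ℝ 1 F 0) (hF0 : F 0 = 0)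
    (hnonneg : ∀ r > 0, 0 ≤ u r) {x : ℝ} (hx : 0 < x) (hux : u x = 0) :
    ∃ y ∈ Ioo 0 x, u y = 0 := by
  obtain ⟨-, S, hSfin, hreg, hjump⟩ := hu
  have hmin : IsLocalMin u x := by
    filter_upwards [Ioi_mem_nhds hx] with y hy
    rw [hux]
    exact hnonneg y hy
  have hxS : x ∉ S := fun hxS => by
    obtain ⟨dl, dr, hdl, hdr, hlt⟩ := hjump x ⟨hx, hxS⟩
    exact (hmin.le_of_hasDerivWithinAt_Iio_Ioi hdl hdr).not_gt hlt
  obtain ⟨K, t, ht, hlip⟩ := hF.exists_lipschitzOnWith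
  have hev : ∀ᶠ y in 𝓝 x, 0 < y ∧ y ∉ S ∧ u y ∈ t :=
    (eventually_gt_nhds hx).and <| (eventually_notMem_of_finite_inter_Ioo (hSfin x hx) hxS).and <|
      (hreg x ⟨hx, hxS⟩).1.continuousAt.preimage_mem_nhds (hux ▸ ht)
  obtain ⟨l, r, ⟨hl, hr⟩, hlr⟩ := mem_nhds_iff_exists_Ioo_subset.1 hev
  obtain ⟨a, hax, hsub⟩ : ∃ a < x, ∀ y ∈ Icc a x, 0 < y ∧ y ∉ S ∧ u y ∈ t :=
    ⟨(l + x) / 2, by linarith, fun y hy => hlr ⟨by linarith [hy.1], by linarith [hy.2]⟩⟩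
  have ha : 0 < a := (hsub a ⟨le_rfl, hax.le⟩).1
  have hC2 : ∀ y ∈ Icc a x, ContDiffAt ℝ 2 u y := fun y hy =>
    (hreg y ⟨(hsub y hy).1, (hsub y hy).2.1⟩).1
  refine ⟨a, ⟨ha, hax⟩, eqOn_zero_of_deriv_deriv_le (B := |p| / a) (M := K + |q| / a ^ 2)
    (fun y hy => ((hC2 y hy).differentiableAt (by norm_num)).hasDerivAt)
    (fun y hy => (((hC2 y hy).derivWithin (m := 1) (by norm_num)).differentiableAt
      (by norm_num)).hasDerivAt) (fun y hy => ?_) (fun y hy => hnonneg y (hsub y hy).1)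
    hux hmin.deriv_eq_zero a ⟨le_rfl, hax.le⟩⟩
  obtain ⟨hy0, hyS, huyt⟩ := hsub y hy
  have hFu : F (u y) ≤ K * u y := by
    have := hlip.dist_le_mul (u y) huyt 0 (mem_of_mem_nhds ht)
    rw [Real.dist_eq, Real.dist_eq, hF0, sub_zero, sub_zero, abs_of_nonneg (hnonneg y hy0)] at this
    exact (le_abs_self _).trans this
  exact le_of_superSolution_ineq ha hy.1 (hnonneg y hy0) (hreg y ⟨hy0, hyS⟩).2 hFu

theorem IsSuperSolutionOn.pos {p q : ℝ} {F u : ℝ → ℝ}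
    (hu : IsSuperSolutionOn p q F (Ioi 0) u) (hF : ContDiffAt ℝ 1 F 0) (hF0 : F 0 = 0)
    (hnonneg : ∀ r > 0, 0 ≤ u r) (hnear : ∀ᶠ r in 𝓝[>] 0, 0 < u r) : ∀ r > 0, 0 < u r := by
  obtain ⟨δ, hδ, hδu⟩ := mem_nhdsGT_iff_exists_Ioo_subset.1 hnear
  by_contra! h
  obtain ⟨r₀, hr₀, hur₀⟩ := h
  have hr₀δ : δ ≤ r₀ := not_lt.1 fun h => (hδu ⟨hr₀, h⟩ : 0 < u r₀).not_ge hur₀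
  have hZ : IsCompact (Icc δ r₀ ∩ u ⁻¹' {0}) :=
    isCompact_Icc.of_isClosed_subset ((hu.1.continuousOn.mono fun r hr =>
      (mem_Ioi.1 hδ).trans_le hr.1).preimage_isClosed_of_isClosed isClosed_Icc isClosed_singleton)
      inter_subset_left
  obtain ⟨x, ⟨⟨hδx, hxr₀⟩, hux⟩, hleast⟩ :=
    hZ.exists_isLeast ⟨r₀, ⟨hr₀δ, le_rfl⟩, le_antisymm hur₀ (hnonneg r₀ hr₀)⟩
  obtain ⟨y, ⟨hy, hyx⟩, huy⟩ :=
    hu.exists_zero_lt hF hF0 hnonneg ((mem_Ioi.1 hδ).trans_le hδx) hux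
  rcases lt_or_ge y δ with hyδ | hyδ
  · exact (hδu ⟨hy, hyδ⟩ : 0 < u y).ne' huy
  · exact hyx.not_ge (hleast ⟨⟨hyδ, hyx.le.trans hxr₀⟩, huy⟩)

theorem IsSubSolutionOn.lt {p q s : ℝ} {F u : ℝ → ℝ}
    (hu : IsSubSolutionOn p q F (Ioi 0) u) (hq : 0 < q) (hs : 0 < s) (hFs : F s = 0)
    (hle : ∀ r > 0, u r ≤ s) : ∀ r > 0, u r < s := by
  intro x hx
  refine (hle x hx).lt_of_ne fun hux => ?_
  obtain ⟨-, S, -, hreg, hjump⟩ := hu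
  have hmax : IsLocalMax u x := by
    filter_upwards [eventually_gt_nhds hx] with y hy
    rw [hux]
    exact hle y hy
  by_cases hxS : x ∈ S
  · obtain ⟨dl, dr, hdl, hdr, hlt⟩ := hjump x ⟨hx, hxS⟩
    have := hmax.neg.le_of_hasDerivWithinAt_Iio_Ioi hdl.neg hdr.neg
    linarith
  · obtain ⟨hC2, hineq⟩ := hreg x ⟨hx, hxS⟩
    have hd2 := hmax.deriv_deriv_nonpos hC2.continuousAt
    rw [hux, hFs, hmax.deriv_eq_zero, mul_zero, add_zero] at hineq
    have : 0 < q / x ^ 2 * s := by positivity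
    linarith

theorem gammaPlus_pos {p q : ℝ} (hq : 0 < q) : 0 < gammaPlus p q := by
  have h : |p - 1| < Real.sqrt ((p - 1) ^ 2 + 4 * q) := by
    rw [← Real.sqrt_sq_eq_abs]
    exact Real.sqrt_lt_sqrt (sq_nonneg _) (by linarith)
  unfold gammaPlus
  linarith [le_abs_self (p - 1)]

theorem tendsto_rpow_nhdsGT_zero {γ : ℝ} (hγ : 0 < γ) :
    Tendsto (fun r : ℝ => r ^ γ) (𝓝[>] 0) (𝓝 0) := by
  simpa [Real.zero_rpow hγ.ne'] using
    (Real.continuousAt_rpow_const 0 γ (.inr hγ.le)).tendsto.mono_left nhdsWithin_le_nhds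

theorem bddAbove_image_Ioc_of_tendsto {g : ℝ → ℝ} {a : ℝ} (hg : ContinuousOn g (Ioi 0))
    (h : Tendsto g (𝓝[>] 0) (𝓝 a)) (R : ℝ) : BddAbove (g '' Ioc 0 R) := by
  obtain ⟨δ, hδ, hnear⟩ :=
    mem_nhdsGT_iff_exists_Ioo_subset.1 (h.eventually (eventually_le_nhds (lt_add_one a)))
  obtain ⟨C, hC⟩ := isCompact_Icc.bddAbove_image
    (hg.mono fun r (hr : r ∈ Icc (δ / 2) R) => (by linarith [hr.1, mem_Ioi.1 hδ] : (0:ℝ) < r))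
  refine ⟨max (a + 1) C, ?_⟩
  rintro _ ⟨r, ⟨hr0, hrR⟩, rfl⟩
  rcases lt_or_ge r δ with hrδ | hrδ
  · exact le_max_of_le_left (hnear ⟨hr0, hrδ⟩)
  · exact le_max_of_le_right (hC ⟨r, ⟨by linarith, hrR⟩, rfl⟩)

namespace AsympZero

variable {u : ℝ → ℝ} {α γ : ℝ}

theorem tendsto_div (h : AsympZero u α γ) :
    Tendsto (fun r => u r / r ^ γ) (𝓝[>] 0) (𝓝 α) := by
  have := h.add_const α
  rw [zero_add] at this
  refine this.congr' ?_
  filter_upwards [self_mem_nhdsWithin] with r (hr : 0 < r)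
  field_simp [(Real.rpow_pos_of_pos hr γ).ne']
  ring

theorem tendsto_zero (h : AsympZero u α γ) (hγ : 0 < γ) : Tendsto u (𝓝[>] 0) (𝓝 0) := by
  have := h.tendsto_div.mul (tendsto_rpow_nhdsGT_zero hγ)
  rw [mul_zero] at this
  refine this.congr' ?_
  filter_upwards [self_mem_nhdsWithin] with r (hr : 0 < r)
  field_simp [(Real.rpow_pos_of_pos hr γ).ne']

theorem eventually_pos (h : AsympZero u α γ) (hα : 0 < α) : ∀ᶠ r in 𝓝[>] 0, 0 < u r := by
  filter_upwards [h.tendsto_div.eventually_const_lt hα, self_mem_nhdsWithin] with r hr (hr0 : 0 < r)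
  exact (div_pos_iff_of_pos_right (Real.rpow_pos_of_pos hr0 γ)).1 hr

theorem exists_le_mul_rpow (h : AsympZero u α γ) (hu : ContinuousOn u (Ioi 0)) (R : ℝ) :
    ∃ C, ∀ r ∈ Ioc 0 R, u r ≤ C * r ^ γ := by
  have hg : ContinuousOn (fun r => u r / r ^ γ) (Ioi 0) :=
    hu.div (continuousOn_id.rpow_const fun r hr => .inl (ne_of_gt hr)) fun r hr =>
      (Real.rpow_pos_of_pos hr γ).ne'
  obtain ⟨C, hC⟩ := bddAbove_image_Ioc_of_tendsto hg h.tendsto_div R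
  refine ⟨C, fun r hr => ?_⟩
  have := hC ⟨r, hr, rfl⟩
  rwa [div_le_iff₀ (Real.rpow_pos_of_pos hr.1 γ)] at this

theorem exists_pos_mul_rpow_le (h : AsympZero u α γ) (hα : 0 < α)
    (hu : ContinuousOn u (Ioi 0)) (hu_pos : ∀ r > 0, 0 < u r) (R : ℝ) :
    ∃ c > 0, ∀ r ∈ Ioc 0 R, c * r ^ γ ≤ u r := by
  have hg : ContinuousOn (fun r => r ^ γ / u r) (Ioi 0) :=
    (continuousOn_id.rpow_const fun r hr => .inl (ne_of_gt hr)).div hu fun r hr =>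
      (hu_pos r hr).ne'
  have hlim : Tendsto (fun r => r ^ γ / u r) (𝓝[>] 0) (𝓝 α⁻¹) := by
    refine (h.tendsto_div.inv₀ hα.ne').congr fun r => ?_
    rw [inv_div]
  obtain ⟨C, hC⟩ := bddAbove_image_Ioc_of_tendsto hg hlim R
  refine ⟨(max C 1)⁻¹, by positivity, fun r hr => ?_⟩
  have hle : r ^ γ / u r ≤ max C 1 := (hC ⟨r, hr, rfl⟩).trans (le_max_left _ _)
  rw [div_le_iff₀ (hu_pos r hr.1)] at hle
  rw [inv_mul_le_iff₀ (by positivity)]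
  linarith

end AsympZero

namespace AsympInfty

variable {u : ℝ → ℝ} {s β : ℝ}

theorem tendsto_sub_mul_sq (h : AsympInfty u s β) :
    Tendsto (fun r => (s - u r) * r ^ 2) atTop (𝓝 β) := by
  have := (tendsto_const_nhds (x := β)).sub h
  rw [sub_zero] at this
  refine this.congr' ?_
  filter_upwards [eventually_ne_atTop 0] with r hr
  field_simp
  ring

theorem tendsto (h : AsympInfty u s β) : Tendsto u atTop (𝓝 s) := by
  have := (tendsto_const_nhds (x := s)).sub
    (h.tendsto_sub_mul_sq.div_atTop (tendsto_pow_atTop two_ne_zero))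
  rw [sub_zero] at this
  refine this.congr' ?_
  filter_upwards [eventually_ne_atTop 0] with r hr
  field_simp
  ring

end AsympInfty

theorem exists_lt_forall_Ioc_le {v : ℝ → ℝ} {a s : ℝ} (hv : ContinuousOn v (Ioi 0))
    (hlt : ∀ r > 0, v r < s) (h : Tendsto v (𝓝[>] 0) (𝓝 a)) (has : a < s) (R : ℝ) :
    ∃ m < s, ∀ r ∈ Ioc 0 R, v r ≤ m := by
  have hg : ContinuousOn (fun r => (s - v r)⁻¹) (Ioi 0) :=
    (continuousOn_const.sub hv).inv₀ fun r hr => (sub_pos.2 (hlt r hr)).ne'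
  obtain ⟨C, hC⟩ := bddAbove_image_Ioc_of_tendsto hg
    ((tendsto_const_nhds.sub h).inv₀ (sub_pos.2 has).ne') R
  refine ⟨s - (max C 1)⁻¹, by simp only [sub_lt_self_iff]; positivity, fun r hr => ?_⟩
  have hle : (s - v r)⁻¹ ≤ max C 1 := (hC ⟨r, hr, rfl⟩).trans (le_max_left _ _)
  linarith [inv_le_of_inv_le₀ (sub_pos.2 (hlt r hr.1)) hle]

theorem exists_lt_comp_div_of_asymp {u v : ℝ → ℝ} {γ s αu αv βu βv : ℝ} (hγ : 0 < γ)
    (hs : 0 < s) (hu : ContinuousOn u (Ioi 0)) (hv : ContinuousOn v (Ioi 0))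
    (hu_pos : ∀ r > 0, 0 < u r) (hv_lt : ∀ r > 0, v r < s)
    (hαu : 0 < αu) (h0u : AsympZero u αu γ) (h0v : AsympZero v αv γ)
    (hβv : 0 < βv) (hiu : AsympInfty u s βu) (hiv : AsympInfty v s βv) :
    ∃ θ₀ > 0, ∀ θ : ℝ, 0 < θ → θ < θ₀ → ∀ r : ℝ, 0 < r → v r < u (r / θ) := by
  obtain ⟨r₂, hv_far⟩ := eventually_atTop.1 <|
    (hiv.tendsto_sub_mul_sq.eventually_const_le (half_lt_self hβv)).and (eventually_gt_atTop 0)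
  have hr₂ : 0 < r₂ := (hv_far r₂ le_rfl).2
  obtain ⟨R₂, hu_far⟩ := eventually_atTop.1 <|
    hiu.tendsto_sub_mul_sq.eventually_le_const (lt_add_one βu)
  obtain ⟨m, hms, hv_m⟩ := exists_lt_forall_Ioc_le hv hv_lt (h0v.tendsto_zero hγ) hs r₂
  obtain ⟨R₀, hu_m⟩ := eventually_atTop.1 <| hiu.tendsto.eventually_const_lt hms
  obtain ⟨C, hv_C⟩ := h0v.exists_le_mul_rpow hv r₂
  obtain ⟨c, hc, hu_c⟩ := h0u.exists_pos_mul_rpow_le hαu hu hu_pos R₀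
  have hsmall : ∀ᶠ θ in 𝓝[>] 0, θ * R₂ < r₂ ∧ (βu + 1) * θ ^ 2 < βv / 2 ∧ C * θ ^ γ < c := by
    have hθ : Tendsto (fun θ : ℝ => θ) (𝓝[>] 0) (𝓝 0) := nhdsWithin_le_nhds
    refine ((hθ.mul_const R₂).eventually_lt_const (by simpa using hr₂)).and <|
      ((hθ.pow 2).const_mul (βu + 1)).eventually_lt_const (by simpa using half_pos hβv) |>.and <|
      ((tendsto_rpow_nhdsGT_zero hγ).const_mul C).eventually_lt_const (by simpa using hc)
  obtain ⟨θ₀, hθ₀, hθ₀small⟩ := mem_nhdsGT_iff_exists_Ioo_subset.1 hsmall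
  refine ⟨θ₀, hθ₀, fun θ hθ hθθ₀ r hr => ?_⟩
  obtain ⟨hθR₂, hθβ, hθC⟩ := hθ₀small ⟨hθ, hθθ₀⟩
  rcases le_or_gt r₂ r with hfar | hnear
  · have hR : R₂ ≤ r / θ := by rw [le_div_iff₀ hθ]; linarith
    have hu_r := hu_far _ hR
    have hv_r := (hv_far r hfar).1
    rw [div_pow, ← mul_div_assoc, div_le_iff₀ (by positivity)] at hu_r
    nlinarith [mul_pos hr hr]
  rcases le_or_gt R₀ (r / θ) with hR | hR
  · exact (hv_m r ⟨hr, hnear.le⟩).trans_lt (hu_m _ hR)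
  have hsplit : r ^ γ = θ ^ γ * (r / θ) ^ γ := by
    rw [← Real.mul_rpow hθ.le (by positivity), mul_div_cancel₀ _ hθ.ne']
  calc v r ≤ C * r ^ γ := hv_C r ⟨hr, hnear.le⟩
    _ = C * θ ^ γ * (r / θ) ^ γ := by rw [hsplit, mul_assoc]
    _ < c * (r / θ) ^ γ := by gcongr
    _ ≤ u (r / θ) := hu_c _ ⟨by positivity, hR.le⟩

theorem stmt2_general (p q sp : ℝ) (hq : 0 < q) (hsp : 0 < sp)
    (F : ℝ → ℝ) (hF : CondF F sp)
    (ub lb : ℝ → ℝ) (αb αl βb βl : ℝ)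
    (hsuper : IsSuperSolutionOn p q F (Set.Ioi 0) ub)
    (hsub : IsSubSolutionOn p q F (Set.Ioi 0) lb)
    (hubnd : ∀ r ∈ Set.Ioi (0:ℝ), 0 ≤ ub r ∧ ub r ≤ sp)
    (hlbnd : ∀ r ∈ Set.Ioi (0:ℝ), 0 ≤ lb r ∧ lb r ≤ sp)
    (hαb : 0 < αb)
    (h0ub : AsympZero ub αb (gammaPlus p q))
    (h0lb : AsympZero lb αl (gammaPlus p q))
    (hβl : 0 < βl)
    (hiub : AsympInfty ub sp βb)
    (hilb : AsympInfty lb sp βl) :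
    ∃ θ₀ > 0, ∀ θ : ℝ, 0 < θ → θ < θ₀ → ∀ r : ℝ, 0 < r → lb r < ub (r / θ) := by
  obtain ⟨hF1, hF0, hFsp, -⟩ := hF
  refine exists_lt_comp_div_of_asymp (gammaPlus_pos hq) hsp hsuper.1.continuousOn
    hsub.1.continuousOn ?_ ?_ hαb h0ub h0lb hβl hiub hilb
  · exact hsuper.pos hF1.contDiffAt hF0 (fun r hr => (hubnd r hr).1) (h0ub.eventually_pos hαb)
  · exact hsub.lt hq hsp hFsp fun r hr => (hlbnd r hr).2

/-- for all sufficiently small `θ > 0`, `ū(·/θ) > u̲` on `(0,∞)`. -/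
theorem stmt2 (p q sp : ℝ) (hp : 0 ≤ p) (hq : 0 < q) (hsp : 0 < sp)
    (F : ℝ → ℝ) (hF : CondF F sp)
    (ub lb : ℝ → ℝ) (αb αl βb βl : ℝ)
    (hsuper : IsSuperSolutionOn p q F (Set.Ioi 0) ub)
    (hsub : IsSubSolutionOn p q F (Set.Ioi 0) lb)
    (hubnd : ∀ r ∈ Set.Ioi (0:ℝ), 0 ≤ ub r ∧ ub r ≤ sp)
    (hlbnd : ∀ r ∈ Set.Ioi (0:ℝ), 0 ≤ lb r ∧ lb r ≤ sp)
    (hαb : 0 < αb)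
    (h0ub : AsympZero ub αb (gammaPlus p q))
    (h0lb : AsympZero lb αl (gammaPlus p q))
    (hβl : 0 < βl)
    (hiub : AsympInfty ub sp βb)
    (hilb : AsympInfty lb sp βl) :
    ∃ θ₀ > 0, ∀ θ : ℝ, 0 < θ → θ < θ₀ → ∀ r : ℝ, 0 < r → lb r < ub (r / θ) :=
  stmt2_general p q sp hq hsp F hF ub lb αb αl βb βl hsuper hsub hubnd hlbnd hαb h0ub h0lb hβl hiub
    hilb
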